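/- Flushing probability of the online scheduling algorithm: when u is drawn uniformly from [0,1), for all 1 ≤ j ≤ t ≤ T the probability that Alg. 2 transmits in at least one slot τ ∈ {j,…,t} (i.e., d(τ) = k*_τ for some τ ∈ {j,…,t}) equals min{Σ_{τ=j}^t x_{k*_τ}(τ), 1}, where the x_{k*_τ}(τ) are the values computed by the Alg. 1 recursion. -/
import Mathlib


open scoped Classical
open MeasureTheory

noncomputable section




/-- Age of information of user `i` under schedule `d`:
`a_i(0) = 0`, and `a_i(t) = 0` if `1_{i,d(t)}(t) = 1`, `a_i(t) = a_i(t-1) + 1` otherwise. -/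
def age (ind : ℕ → ℕ → ℕ → ℝ) (d : ℕ → ℕ) (i : ℕ) : ℕ → ℕ
  | 0 => 0
  | t + 1 => if ind i (d (t + 1)) (t + 1) = 1 then 0 else age ind d i t + 1

/-- Inner loop of Alg. 1 at a fixed slot: `innerLoop Ck θ ps j` is the value of the current
slot's `x`-variable after processing iterations `1, …, j`, where `ps j` is the (final)
contribution `Σ_{τ=j}^{t-1} x_{k*_τ}(τ)` of the earlier slots.  At iteration `j` the current
value of `Σ_{τ=j}^{t} x_{k*_τ}(τ)` is `ps j + innerLoop Ck θ ps (j-1)`; if it is `< 1`, the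
`x`-variable is increased by `(1/Ck) Σ_{τ=j}^{t} x_{k*_τ}(τ) + 1/(θ·Ck)`. -/
def innerLoop (Ck θ : ℝ) (ps : ℕ → ℝ) : ℕ → ℝ
  | 0 => 0
  | j + 1 =>
      if ps (j + 1) + innerLoop Ck θ ps j < 1 then
        innerLoop Ck θ ps j + (ps (j + 1) + innerLoop Ck θ ps j) / Ck + 1 / (θ * Ck)
      else innerLoop Ck θ ps j

/-- `xvec Ck θ t τ` : the value of `x_{k*_τ}(τ)` after Alg. 1 has processed slots `1, …, t`
(`Ck τ` stands for the cost `C_{k*_τ}` used in slot `τ`). -/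
def xvec (Ck : ℕ → ℝ) (θ : ℝ) : ℕ → ℕ → ℝ
  | 0, _ => 0
  | t + 1, τ =>
      if τ = t + 1 then
        innerLoop (Ck (t + 1)) θ (fun j => ∑ σ ∈ Finset.Ico j (t + 1), xvec Ck θ t σ) (t + 1)
      else xvec Ck θ t τ

/-- Final value of `x_{k*_t}(t)` computed by Alg. 1. -/
def xval (Ck : ℕ → ℝ) (θ : ℝ) (t : ℕ) : ℝ := xvec Ck θ t t

/-- `psFun Ck θ t j = Σ_{σ=j}^{t-1} x_{k*_σ}(σ)` (final values of the slots before `t`). -/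
def psFun (Ck : ℕ → ℝ) (θ : ℝ) (t : ℕ) (j : ℕ) : ℝ :=
  ∑ σ ∈ Finset.Ico j t, xvec Ck θ (t - 1) σ

/-- The update condition of Alg. 1 at iteration `j` of slot `t`: the current value of
`Σ_{τ=j}^{t} x_{k*_τ}(τ)` (earlier slots final, slot `t` after iterations `1,…,j-1`) is `< 1`. -/
def algCond (Ck : ℕ → ℝ) (θ : ℝ) (t j : ℕ) : Prop :=
  psFun Ck θ t j + innerLoop (Ck t) θ (psFun Ck θ t) (j - 1) < 1

/-- Final value of `z_{i,j}(t)` computed by Alg. 1 (it is the same for every user `i`). -/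
def zval (Ck : ℕ → ℝ) (θ : ℝ) (j t : ℕ) : ℝ :=
  if algCond Ck θ t j then
    1 - (psFun Ck θ t j + innerLoop (Ck t) θ (psFun Ck θ t) (j - 1))
  else 0

/-- Final value of `y_{i,j}(t)` computed by Alg. 1 (it is the same for every user `i`). -/
def yval (Ck : ℕ → ℝ) (θ : ℝ) (N : ℕ) (j t : ℕ) : ℝ :=
  if algCond Ck θ t j then 1 / N else 0

/-- `k*_t`: the minimum power level `k ≥ 1` with `1_{i,k}(t) = 1` for every user `i`. -/
def kstar (ind : ℕ → ℕ → ℕ → ℝ) (N : ℕ) (t : ℕ) : ℕ :=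
  sInf {k : ℕ | 1 ≤ k ∧ ∀ i ∈ Finset.Icc 1 N, ind i k t = 1}

/-- `X(t) = Σ_{τ=1}^t min{x_{k*_τ}(τ), 1}`, used by Alg. 2 (so `X(0) = 0`). -/
def bigX (Ck : ℕ → ℝ) (θ : ℝ) (t : ℕ) : ℝ :=
  ∑ τ ∈ Finset.Icc 1 t, min (xval Ck θ τ) 1

/-- Alg. 2 transmits in slot `t` for randomness `u` iff `u + k ∈ [X(t-1), X(t))` for some
integer `k ≥ 0`. -/
def transmits (Ck : ℕ → ℝ) (θ : ℝ) (u : ℝ) (t : ℕ) : Prop :=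
  ∃ k : ℕ, bigX Ck θ (t - 1) ≤ u + k ∧ u + k < bigX Ck θ t

/-- The decision of Alg. 2 in slot `t` for randomness `u`: transmit with power `k*_t`, or idle. -/
def dAlg (ind : ℕ → ℕ → ℕ → ℝ) (N : ℕ) (Ck : ℕ → ℝ) (θ : ℝ) (u : ℝ) (t : ℕ) : ℕ :=
  if transmits Ck θ u t then kstar ind N t else 0

/-- The constant `θ = (1 + 1/C_M)^⌊C_1⌋ − 1` of Alg. 1. -/
def thetaOf (C : ℕ → ℝ) (M : ℕ) : ℝ := (1 + 1 / C M) ^ ⌊C 1⌋ - 1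

lemma measure_wrap (a b : ℝ) (ha : 0 ≤ a) (hab : a ≤ b) :
    (volume {u : ℝ | u ∈ Set.Ico (0:ℝ) 1 ∧ ∃ k : ℕ, a ≤ u + k ∧ u + k < b}).toReal
      = min (b - a) 1 := by
  rcases le_or_gt 1 (b - a) with hL | hL
  · have hset : {u : ℝ | u ∈ Set.Ico (0:ℝ) 1 ∧ ∃ k : ℕ, a ≤ u + k ∧ u + k < b}
        = Set.Ico (0:ℝ) 1 := by
      ext u
      simp only [Set.mem_setOf_eq, Set.mem_Ico]
      constructor
      · rintro ⟨h, -⟩; exact h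
      · rintro ⟨h0, h1⟩
        have hnn : (0:ℤ) ≤ ⌈a - u⌉ := by
          have h2 : ((-1:ℤ):ℝ) < a - u := by push_cast; linarith
          have := Int.lt_ceil.mpr h2
          omega
        refine ⟨⟨h0, h1⟩, ⌈a - u⌉.toNat, ?_, ?_⟩
        all_goals
          have hc : ((⌈a - u⌉.toNat : ℕ) : ℝ) = ⌈a - u⌉ := by
            exact_mod_cast Int.toNat_of_nonneg hnn
          rw [hc]
        · have := Int.le_ceil (a - u); linarith
        · have := Int.ceil_lt_add_one (a - u); linarith
    rw [hset, Real.volume_Ico, ENNReal.toReal_ofReal (by norm_num),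
      min_eq_right hL]
    norm_num
  · set k0 : ℕ := ⌊a⌋.toNat with hk0
    have hk0r : (k0 : ℝ) = ⌊a⌋ := by
      rw [hk0]; exact_mod_cast Int.toNat_of_nonneg (Int.floor_nonneg.mpr ha)
    have hf0 : (0:ℝ) ≤ a - k0 := by rw [hk0r]; linarith [Int.floor_le a]
    have hf1 : a - k0 < 1 := by rw [hk0r]; linarith [Int.lt_floor_add_one a]
    have hset : {u : ℝ | u ∈ Set.Ico (0:ℝ) 1 ∧ ∃ k : ℕ, a ≤ u + k ∧ u + k < b}
        = Set.Ico (a - k0) (min (b - k0) 1) ∪ Set.Ico 0 (b - k0 - 1) := by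
      ext u
      simp only [Set.mem_setOf_eq, Set.mem_Ico, Set.mem_union, lt_min_iff]
      constructor
      · rintro ⟨⟨h0, h1⟩, k, hk1, hk2⟩
        have hge : k0 ≤ k := by
          have : (k0:ℝ) < (k:ℝ) + 1 := by rw [hk0r]; nlinarith [Int.floor_le a]
          exact_mod_cast Nat.lt_succ_iff.mp (by exact_mod_cast this)
        have hle : k ≤ k0 + 1 := by
          have : (k:ℝ) < (k0:ℝ) + 2 := by
            rw [hk0r]; nlinarith [Int.lt_floor_add_one a]
          exact_mod_cast Nat.lt_succ_iff.mp (by exact_mod_cast this)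
        have hk : k = k0 ∨ k = k0 + 1 := by omega
        rcases hk with rfl | rfl
        · left; refine ⟨by linarith, by linarith, h1⟩
        · right; push_cast at hk1 hk2; exact ⟨h0, by linarith⟩
      · rintro (⟨h1, h2, h3⟩ | ⟨h1, h2⟩)
        · exact ⟨⟨by linarith, h3⟩, k0, by constructor <;> linarith⟩
        · refine ⟨⟨h1, by linarith⟩, k0 + 1, ?_⟩
          push_cast
          constructor <;> linarith
    rw [hset]
    have hdisj : Disjoint (Set.Ico (a - (k0:ℝ)) (min (b - k0) 1))
        (Set.Ico (0:ℝ) (b - k0 - 1)) := by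
      apply Set.disjoint_left.mpr
      rintro u ⟨h1, -⟩ ⟨-, h2⟩
      linarith
    rw [measure_union hdisj measurableSet_Ico, Real.volume_Ico, Real.volume_Ico,
      ENNReal.toReal_add ENNReal.ofReal_ne_top ENNReal.ofReal_ne_top,
      ENNReal.toReal_ofReal', ENNReal.toReal_ofReal', min_eq_left hL.le]
    rcases le_total (b - (k0:ℝ)) 1 with h | h
    · rw [min_eq_left h, max_eq_left (by linarith), max_eq_right (by linarith)]
      ring
    · rw [min_eq_right h, max_eq_left (by linarith), max_eq_left (by linarith)]
      ring

lemma innerLoop_nonneg {Ck th : ℝ} (hC : 0 < Ck) (hth : 0 < th) {ps : ℕ → ℝ}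
    (hps : ∀ j, 0 ≤ ps j) : ∀ j, 0 ≤ innerLoop Ck th ps j
  | 0 => le_refl 0
  | j + 1 => by
    have ih := innerLoop_nonneg hC hth hps j
    rw [innerLoop]
    split
    · have := hps (j + 1)
      have h1 : 0 ≤ (ps (j + 1) + innerLoop Ck th ps j) / Ck :=
        div_nonneg (by linarith) hC.le
      have h2 : 0 ≤ 1 / (th * Ck) := by positivity
      linarith
    · exact ih

lemma xvec_nonneg {Ck : ℕ → ℝ} {th : ℝ} (hC : ∀ σ, 0 < Ck σ) (hth : 0 < th) :
    ∀ t τ, 0 ≤ xvec Ck th t τ := by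
  intro t
  induction t with
  | zero => intro τ; rw [xvec]
  | succ t ih =>
    intro τ
    rw [xvec]
    split
    · exact innerLoop_nonneg (hC _) hth
        (fun j => Finset.sum_nonneg fun σ _ => ih σ) _
    · exact ih τ

lemma bigX_mono {Ck : ℕ → ℝ} {th : ℝ} (hC : ∀ σ, 0 < Ck σ) (hth : 0 < th) :
    Monotone (bigX Ck th) := by
  intro s t hst
  unfold bigX
  apply Finset.sum_le_sum_of_subset_of_nonneg
  · exact Finset.Icc_subset_Icc le_rfl hst
  · intro τ _ _
    exact le_min (xvec_nonneg hC hth τ τ) zero_le_one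

lemma min_sum_min {s : Finset ℕ} {g : ℕ → ℝ} (hg : ∀ i ∈ s, 0 ≤ g i) :
    min (∑ i ∈ s, min (g i) 1) 1 = min (∑ i ∈ s, g i) 1 := by
  by_cases h : ∀ i ∈ s, g i < 1
  · congr 1
    exact Finset.sum_congr rfl fun i hi => min_eq_left (h i hi).le
  · push_neg at h
    obtain ⟨i0, hi0, hgi0⟩ := h
    have h1 : (1:ℝ) ≤ ∑ i ∈ s, min (g i) 1 := by
      have := Finset.single_le_sum (f := fun i => min (g i) 1)
        (fun i hi => le_min (hg i hi) zero_le_one) hi0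
      simpa [min_eq_right hgi0] using this
    have h2 : (1:ℝ) ≤ ∑ i ∈ s, g i :=
      le_trans hgi0 (Finset.single_le_sum hg hi0)
    rw [min_eq_right h1, min_eq_right h2]

/-- flushing probability of Alg. 2: when `u` is drawn uniformly from `[0,1)`,
for all `1 ≤ j ≤ t ≤ T` the probability that Alg. 2 transmits in at least one slot
`τ ∈ {j,…,t}` equals `min{Σ_{τ=j}^t x_{k*_τ}(τ), 1}`. -/
theorem stmt11 (N M T : ℕ) (hN : 1 ≤ N) (hM : 1 ≤ M) (hT : 1 ≤ T)
    (ind : ℕ → ℕ → ℕ → ℝ)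
    (hind01 : ∀ i k t, ind i k t = 0 ∨ ind i k t = 1)
    (hmono : ∀ i k k' t, k ≤ k' → ind i k t = 1 → ind i k' t = 1)
    (hcov : ∀ i t, ind i M t = 1)
    (C : ℕ → ℝ) (hC1 : 1 ≤ C 1)
    (hCmono : ∀ k k', 1 ≤ k → k ≤ k' → k' ≤ M → C k ≤ C k') :
    ∀ t ∈ Finset.Icc 1 T, ∀ j ∈ Finset.Icc 1 t,
      (volume {u : ℝ | u ∈ Set.Ico (0 : ℝ) 1 ∧
          ∃ τ ∈ Finset.Icc j t,
            transmits (fun σ => C (kstar ind N σ)) (thetaOf C M) u τ}).toReal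
        = min (∑ τ ∈ Finset.Icc j t,
            xval (fun σ => C (kstar ind N σ)) (thetaOf C M) τ) 1 := by
  set Ck : ℕ → ℝ := fun σ => C (kstar ind N σ) with hCkdef
  set th : ℝ := thetaOf C M with hthdef
  -- costs are at least 1
  have hCk : ∀ σ, 0 < Ck σ := by
    intro σ
    have hMmem : M ∈ {k : ℕ | 1 ≤ k ∧ ∀ i ∈ Finset.Icc 1 N, ind i k σ = 1} :=
      ⟨hM, fun i _ => hcov i σ⟩
    have hne : {k : ℕ | 1 ≤ k ∧ ∀ i ∈ Finset.Icc 1 N, ind i k σ = 1}.Nonempty :=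
      ⟨M, hMmem⟩
    have hmem := Nat.sInf_mem hne
    have h1 : 1 ≤ kstar ind N σ := hmem.1
    have h2 : kstar ind N σ ≤ M := Nat.sInf_le hMmem
    have : C 1 ≤ C (kstar ind N σ) := hCmono 1 _ le_rfl h1 h2
    simp only [hCkdef]
    linarith
  -- θ is positive
  have hth : 0 < th := by
    have hCM : 1 ≤ C M := le_trans hC1 (hCmono 1 M le_rfl hM le_rfl)
    have hx : 1 < 1 + 1 / C M := by
      have : 0 < 1 / C M := by positivity
      linarith
    have hn : 0 ≤ ⌊C 1⌋ := Int.floor_nonneg.mpr (by linarith)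
    have hpow : 1 < (1 + 1 / C M) ^ ⌊C 1⌋ := by
      have hn1 : 1 ≤ ⌊C 1⌋ :=
        Int.le_floor.mpr (show ((1:ℤ):ℝ) ≤ C 1 by exact_mod_cast hC1)
      rw [← Int.toNat_of_nonneg hn, zpow_natCast]
      exact one_lt_pow₀ hx (by omega)
    simp only [hthdef, thetaOf]
    linarith
  have hxnn : ∀ τ, 0 ≤ xval Ck th τ := fun τ => xvec_nonneg hCk hth τ τ
  have hXnn : ∀ s, 0 ≤ bigX Ck th s := fun s =>
    Finset.sum_nonneg fun τ _ => le_min (hxnn τ) zero_le_one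
  intro t ht j hj
  rw [Finset.mem_Icc] at ht hj
  obtain ⟨hj1, hjt⟩ := hj
  -- the union of transmission events is one interval
  have hset : {u : ℝ | u ∈ Set.Ico (0 : ℝ) 1 ∧
      ∃ τ ∈ Finset.Icc j t, transmits Ck th u τ}
      = {u : ℝ | u ∈ Set.Ico (0:ℝ) 1 ∧
          ∃ k : ℕ, bigX Ck th (j - 1) ≤ u + k ∧ u + k < bigX Ck th t} := by
    ext u
    simp only [Set.mem_setOf_eq]
    constructor
    · rintro ⟨hu, τ, hτ, k, h1, h2⟩
      rw [Finset.mem_Icc] at hτ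
      refine ⟨hu, k, ?_, ?_⟩
      · exact le_trans (bigX_mono hCk hth (by omega : j - 1 ≤ τ - 1)) h1
      · exact lt_of_lt_of_le h2 (bigX_mono hCk hth hτ.2)
    · rintro ⟨hu, k, h1, h2⟩
      set P : ℕ → Prop := fun τ => j ≤ τ ∧ bigX Ck th (τ - 1) ≤ u + k with hP
      have hPj : P j := ⟨le_rfl, h1⟩
      set τ0 := Nat.findGreatest P t with hτ0def
      have hτ0 : P τ0 := Nat.findGreatest_spec hjt hPj
      have hτ0le : τ0 ≤ t := Nat.findGreatest_le t
      refine ⟨hu, τ0, Finset.mem_Icc.mpr ⟨hτ0.1, hτ0le⟩, k, hτ0.2, ?_⟩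
      rcases eq_or_lt_of_le hτ0le with heq | hlt
      · rw [heq]; exact h2
      · have hnot : ¬ P (τ0 + 1) :=
          Nat.findGreatest_is_greatest (Nat.lt_succ_self τ0) hlt
        by_contra hge
        exact hnot ⟨le_trans hτ0.1 (Nat.le_succ _),
          by simpa using le_of_not_gt hge⟩
  rw [hset]
  have hab : bigX Ck th (j - 1) ≤ bigX Ck th t := bigX_mono hCk hth (by omega)
  rw [measure_wrap _ _ (hXnn _) hab]
  -- identify the length with the sum
  have hsum : bigX Ck th t - bigX Ck th (j - 1)
      = ∑ τ ∈ Finset.Icc j t, min (xval Ck th τ) 1 := by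
    have h1 : Finset.Icc 1 t = Finset.Ico 1 (t + 1) := by
      rw [Finset.Ico_add_one_right_eq_Icc]
    have h2 : Finset.Icc 1 (j - 1) = Finset.Ico 1 j := by
      rw [← Finset.Ico_add_one_right_eq_Icc]
      congr 1
      omega
    have h3 : Finset.Icc j t = Finset.Ico j (t + 1) := by
      rw [Finset.Ico_add_one_right_eq_Icc]
    have hcons := Finset.sum_Ico_consecutive
      (fun τ => min (xval Ck th τ) 1) (hj1) (by omega : j ≤ t + 1)
    simp only [bigX, h1, h2, h3]
    linarith [hcons]
  rw [hsum]
  exact min_sum_min fun τ _ => hxnn τ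


end
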